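/- arXiv:1204.1226 — 3 statements merged into one kernel-verified Lean document; each statement's English description precedes it below -/
import Mathlib

section
/- Let X be a real Gaussian random variable with mean a and variance ε ∈ (0,1). Then E[((a/X) - 1)² · 1{X² ≥ ε}] ≤ min(1, 8ε/a²). -/
/-!
On `{X² ≥ ε}` we have `(a/X - 1)² = (X - a)²/X²`. Bounding `X²` below by `ε` gives
`(a/X - 1)² ≤ (X - a)²/ε`, whose expectation is `1`. Writing `a = X - (X - a)` gives
`a² ≤ 2X² + 2(X - a)²`, hence `(a/X - 1)² ≤ 2(X - a)²/a² + 2(X - a)⁴/(a²ε)`, whose expectation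
is `2ε/a² + 6ε/a² = 8ε/a²`. The central moments `ε` and `3ε²` are read off the moment generating
function `exp (ε t² / 2)` of `X - a`.
-/

open MeasureTheory ProbabilityTheory Real
open scoped NNReal

lemma hasDerivAt_mul_exp_mul_sq_div_two {c t p' : ℝ} {p : ℝ → ℝ} (hp : HasDerivAt p p' t) :
    HasDerivAt (fun s => p s * rexp (c * s ^ 2 / 2))
      ((p' + c * t * p t) * rexp (c * t ^ 2 / 2)) t := by
  have he : HasDerivAt (fun s => rexp (c * s ^ 2 / 2)) (rexp (c * t ^ 2 / 2) * (c * t)) t := by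
    convert (((hasDerivAt_pow 2 t).const_mul c).div_const 2).exp using 1
    norm_num
    ring
  exact (hp.fun_mul he).congr_deriv (by ring)

lemma iteratedDeriv_exp_mul_sq_div_two_zero (c : ℝ) :
    iteratedDeriv 2 (fun t => rexp (c * t ^ 2 / 2)) 0 = c ∧
      iteratedDeriv 4 (fun t => rexp (c * t ^ 2 / 2)) 0 = 3 * c ^ 2 := by
  have d1 : deriv (fun t => rexp (c * t ^ 2 / 2)) = fun t => c * t * rexp (c * t ^ 2 / 2) := by
    ext t
    simpa using (hasDerivAt_mul_exp_mul_sq_div_two (c := c) (hasDerivAt_const t (1 : ℝ))).deriv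
  have d2 : deriv (fun t => c * t * rexp (c * t ^ 2 / 2)) =
      fun t => (c + c ^ 2 * t ^ 2) * rexp (c * t ^ 2 / 2) := by
    ext t
    rw [(hasDerivAt_mul_exp_mul_sq_div_two (p := fun s => c * s)
      (by simpa using (hasDerivAt_id t).const_mul c)).deriv]
    ring
  have d3 : deriv (fun t => (c + c ^ 2 * t ^ 2) * rexp (c * t ^ 2 / 2)) =
      fun t => (3 * c ^ 2 * t + c ^ 3 * t ^ 3) * rexp (c * t ^ 2 / 2) := by
    ext t
    rw [(hasDerivAt_mul_exp_mul_sq_div_two (p := fun s => c + c ^ 2 * s ^ 2)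
      (((hasDerivAt_pow 2 t).const_mul (c ^ 2)).const_add c)).deriv]
    norm_num
    ring
  have d4 : deriv (fun t => (3 * c ^ 2 * t + c ^ 3 * t ^ 3) * rexp (c * t ^ 2 / 2)) 0 =
      3 * c ^ 2 := by
    rw [(hasDerivAt_mul_exp_mul_sq_div_two (p := fun s => 3 * c ^ 2 * s + c ^ 3 * s ^ 3)
      (((hasDerivAt_id' 0).const_mul (3 * c ^ 2)).fun_add
        ((hasDerivAt_pow 3 0).const_mul (c ^ 3)))).deriv]
    simp
  constructor
  · rw [iteratedDeriv_succ, iteratedDeriv_one, d1, d2]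
    simp
  · rw [iteratedDeriv_succ, iteratedDeriv_succ, iteratedDeriv_succ, iteratedDeriv_one,
      d1, d2, d3, d4]

section GaussianMoments

variable {μ : ℝ} {v : ℝ≥0}

lemma integrable_sub_pow_gaussianReal (n : ℕ) :
    Integrable (fun x => (x - μ) ^ n) (gaussianReal μ v) := by
  have h : Integrable (fun x : ℝ => x ^ n) ((gaussianReal μ v).map (· - μ)) := by
    rw [gaussianReal_map_sub_const, sub_self]
    exact integrable_pow_of_mem_interior_integrableExpSet (by simp) n
  exact h.comp_measurable (by fun_prop)

lemma integral_sub_pow_gaussianReal (n : ℕ) :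
    ∫ x, (x - μ) ^ n ∂gaussianReal μ v = iteratedDeriv n (fun t => rexp (v * t ^ 2 / 2)) 0 := by
  calc ∫ x, (x - μ) ^ n ∂gaussianReal μ v
      = ∫ x, x ^ n ∂(gaussianReal μ v).map (· - μ) := by
        rw [integral_map (by fun_prop) (by fun_prop)]
    _ = ∫ x, x ^ n ∂gaussianReal 0 v := by rw [gaussianReal_map_sub_const, sub_self]
    _ = iteratedDeriv n (mgf id (gaussianReal 0 v)) 0 :=
        (iteratedDeriv_mgf_zero (by simp) n).symm
    _ = iteratedDeriv n (fun t => rexp (v * t ^ 2 / 2)) 0 := by simp [mgf_id_gaussianReal]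

lemma integral_sub_sq_gaussianReal : ∫ x, (x - μ) ^ 2 ∂gaussianReal μ v = v := by
  rw [integral_sub_pow_gaussianReal, (iteratedDeriv_exp_mul_sq_div_two_zero _).1]

lemma integral_sub_pow_four_gaussianReal :
    ∫ x, (x - μ) ^ 4 ∂gaussianReal μ v = 3 * (v : ℝ) ^ 2 := by
  rw [integral_sub_pow_gaussianReal, (iteratedDeriv_exp_mul_sq_div_two_zero _).2]

end GaussianMoments

lemma div_sub_one_sq_eq {a x : ℝ} (hx : x ≠ 0) : (a / x - 1) ^ 2 = (x - a) ^ 2 / x ^ 2 := by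
  field_simp
  ring

lemma div_sub_one_sq_le_sub_sq_div {a x ε : ℝ} (hε : 0 < ε) (hx : ε ≤ x ^ 2) :
    (a / x - 1) ^ 2 ≤ (x - a) ^ 2 / ε := by
  rw [div_sub_one_sq_eq (by rintro rfl; linarith)]
  gcongr

lemma div_sub_one_sq_le_sub_sq_add_sub_pow_four {a x ε : ℝ} (ha : a ≠ 0) (hε : 0 < ε)
    (hx : ε ≤ x ^ 2) :
    (a / x - 1) ^ 2 ≤ 2 / a ^ 2 * (x - a) ^ 2 + 2 / (a ^ 2 * ε) * (x - a) ^ 4 := by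
  have hx0 : 0 < x ^ 2 := hε.trans_le hx
  have hx' : x ≠ 0 := by rintro rfl; simp at hx0
  -- `a = x - (x - a)`, so `a² ≤ 2x² + 2(x - a)²`
  have key : (x - a) ^ 2 / x ^ 2 ≤
      (2 * (x - a) ^ 2 * x ^ 2 + 2 * (x - a) ^ 4) / (a ^ 2 * x ^ 2) := by
    rw [div_le_div_iff₀ hx0 (by positivity)]
    nlinarith [mul_nonneg (sq_nonneg (x - a)) (sq_nonneg (x + (x - a))),
      mul_nonneg (sq_nonneg (x - a)) hx0.le]
  calc (a / x - 1) ^ 2 ≤ 2 / a ^ 2 * (x - a) ^ 2 + 2 / (a ^ 2 * x ^ 2) * (x - a) ^ 4 := by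
        rw [div_sub_one_sq_eq hx']
        convert key using 1
        field_simp
    _ ≤ 2 / a ^ 2 * (x - a) ^ 2 + 2 / (a ^ 2 * ε) * (x - a) ^ 4 := by gcongr

lemma integral_div_sub_one_sq_indicator_le {ν : Measure ℝ} {a ε : ℝ} {g : ℝ → ℝ}
    (hg : Integrable g ν) (hg0 : 0 ≤ g) (h : ∀ x, ε ≤ x ^ 2 → (a / x - 1) ^ 2 ≤ g x) :
    ∫ x, (a / x - 1) ^ 2 * Set.indicator {y | ε ≤ y ^ 2} 1 x ∂ν ≤ ∫ x, g x ∂ν := by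
  refine integral_mono_of_nonneg (ae_of_all _ fun x => ?_) hg (ae_of_all _ fun x => ?_)
  · exact mul_nonneg (sq_nonneg _) (Set.indicator_nonneg (fun _ _ => zero_le_one) x)
  · by_cases hx : ε ≤ x ^ 2
    · simpa [Set.indicator_of_mem (show x ∈ {y | ε ≤ y ^ 2} from hx)] using h x hx
    · simpa [Set.indicator_of_notMem (show x ∉ {y | ε ≤ y ^ 2} from hx)] using hg0 x

theorem stmt_0_general (a : ℝ) (ha : a ≠ 0) (ε : NNReal) (hε0 : 0 < ε) :
    ∫ x, ((a / x - 1) ^ 2 * Set.indicator {y : ℝ | (ε : ℝ) ≤ y ^ 2} 1 x)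
      ∂(gaussianReal a ε) ≤ min 1 (8 * (ε : ℝ) / a ^ 2) := by
  have hε : (0 : ℝ) < ε := hε0
  have h2 := integrable_sub_pow_gaussianReal (μ := a) (v := ε) 2
  have h4 := integrable_sub_pow_gaussianReal (μ := a) (v := ε) 4
  refine le_min ?_ ?_
  · calc _ ≤ ∫ x, (x - a) ^ 2 / ε ∂gaussianReal a ε :=
          integral_div_sub_one_sq_indicator_le (h2.div_const _) (fun x => by positivity)
            fun x hx => div_sub_one_sq_le_sub_sq_div hε hx
      _ = 1 := by rw [integral_div, integral_sub_sq_gaussianReal, div_self hε.ne']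
  · calc _ ≤ ∫ x, (2 / a ^ 2 * (x - a) ^ 2 + 2 / (a ^ 2 * ε) * (x - a) ^ 4) ∂gaussianReal a ε :=
          integral_div_sub_one_sq_indicator_le ((h2.const_mul _).add (h4.const_mul _))
            (fun x => by positivity) fun x hx =>
              div_sub_one_sq_le_sub_sq_add_sub_pow_four ha hε hx
      _ = 2 / a ^ 2 * ε + 2 / (a ^ 2 * ε) * (3 * (ε : ℝ) ^ 2) := by
          rw [integral_add (h2.const_mul _) (h4.const_mul _), integral_const_mul,
            integral_const_mul, integral_sub_sq_gaussianReal, integral_sub_pow_four_gaussianReal]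
      _ = 8 * ε / a ^ 2 := by field_simp; ring

/-- For `X ~ N(a, ε)` with `ε ∈ (0,1)`,
`E[((a/X) - 1)² · 1{X² ≥ ε}] ≤ min(1, 8ε/a²)`. -/
theorem stmt_0 (a : ℝ) (ha : a ≠ 0) (ε : NNReal) (hε0 : 0 < ε) (hε1 : (ε : ℝ) < 1) :
    ∫ x, ((a / x - 1) ^ 2 * Set.indicator {y : ℝ | (ε : ℝ) ≤ y ^ 2} 1 x)
      ∂(gaussianReal a ε) ≤ min 1 (8 * (ε : ℝ) / a ^ 2) :=
  stmt_0_general a ha ε hε0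
end

section
/- Let ω = (ω_j) and λ = (λ_j) be strictly positive sequences, set Δ_k := max_{1≤j≤k} ω_j/λ_j and δ_k := k Δ_k log(max(Δ_k, k+2))/log(k+2). If a = (a_j) is another strictly positive sequence with (1/d) ≤ a_j²/λ_j ≤ d for all j (some d ≥ 1), then δ_k^a ≤ d ζ_d δ_k^λ for all k ≥ 1, where ζ_d = log(3d)/log 3 and δ_k^α denotes the quantity δ_k built from the sequence α in place of λ (i.e., with Δ_k^α = max_{1≤j≤k} ω_j/α_j²). -/
/-- `Δ_k = max_{1≤j≤k} ω_j / s_j` built from a denominator sequence `s`. -/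
noncomputable def DeltaSeq (ω s : ℕ → ℝ) (k : ℕ) (hk : 1 ≤ k) : ℝ :=
  (Finset.Icc 1 k).sup' (Finset.nonempty_Icc.2 hk) (fun j => ω j / s j)

/-- `δ_k = k Δ_k log(max(Δ_k, k+2)) / log(k+2)`. -/
noncomputable def deltaSeq (ω s : ℕ → ℝ) (k : ℕ) (hk : 1 ≤ k) : ℝ :=
  k * DeltaSeq ω s k hk * Real.log (max (DeltaSeq ω s k hk) (k + 2)) / Real.log (k + 2)

/-- If `1/d ≤ a_j²/λ_j ≤ d` for all `j ≥ 1`, then the penalty sequence built from the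
eigenvalues `a` is comparable to the one built from `λ`: `δ_k^a ≤ d ζ_d δ_k^λ`, with
`ζ_d = log(3d)/log 3`. Here `δ_k^a` uses `Δ_k^a = max_{1≤j≤k} ω_j/a_j²` and `δ_k^λ` uses
`Δ_k = max_{1≤j≤k} ω_j/λ_j`. -/
theorem stmt_13 (ω lam a : ℕ → ℝ) (d : ℝ) (hd : 1 ≤ d)
    (hω : ∀ j, 1 ≤ j → 0 < ω j) (hlam : ∀ j, 1 ≤ j → 0 < lam j)
    (ha : ∀ j, 1 ≤ j → 0 < a j)
    (hcomp : ∀ j, 1 ≤ j → 1 / d ≤ (a j) ^ 2 / lam j ∧ (a j) ^ 2 / lam j ≤ d) :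
    ∀ k (hk : 1 ≤ k),
      deltaSeq ω (fun j => (a j) ^ 2) k hk ≤
        d * (Real.log (3 * d) / Real.log 3) * deltaSeq ω lam k hk := by
  intro k hk
  have hd0 : (0:ℝ) < d := lt_of_lt_of_le one_pos hd
  have hk3 : (3:ℝ) ≤ (k:ℝ) + 2 := by
    have : (1:ℝ) ≤ (k:ℝ) := by exact_mod_cast hk
    linarith
  have hmem1 : 1 ∈ Finset.Icc 1 k := Finset.mem_Icc.2 ⟨le_refl 1, hk⟩
  set Δa := DeltaSeq ω (fun j => (a j) ^ 2) k hk with hΔadef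
  set Δ := DeltaSeq ω lam k hk with hΔdef
  have hΔpos : 0 < Δ := by
    have h1 : ω 1 / lam 1 ≤ Δ := Finset.le_sup' (fun j => ω j / lam j) hmem1
    have := div_pos (hω 1 le_rfl) (hlam 1 le_rfl)
    linarith
  have hΔapos : 0 < Δa := by
    have h1 : ω 1 / (a 1) ^ 2 ≤ Δa := Finset.le_sup' (fun j => ω j / (a j) ^ 2) hmem1
    have := div_pos (hω 1 le_rfl) (pow_pos (ha 1 le_rfl) 2)
    linarith
  have hΔale : Δa ≤ d * Δ := by
    rw [hΔadef]
    apply Finset.sup'_le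
    intro j hj
    have hj1 : 1 ≤ j := (Finset.mem_Icc.1 hj).1
    have hlj := hlam j hj1
    have haj := pow_pos (ha j hj1) 2
    have hwj := hω j hj1
    have h1 := (hcomp j hj1).1
    have hlle : lam j ≤ d * (a j) ^ 2 := by
      rw [div_le_div_iff₀ hd0 hlj] at h1
      nlinarith
    have step : ω j / (a j) ^ 2 ≤ d * (ω j / lam j) := by
      rw [mul_div_assoc', div_le_div_iff₀ haj hlj]
      nlinarith
    calc ω j / (a j) ^ 2 ≤ d * (ω j / lam j) := step
      _ ≤ d * Δ := by
          have : ω j / lam j ≤ Δ := Finset.le_sup' (fun j => ω j / lam j) hj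
          nlinarith
  set M := max Δ ((k:ℝ) + 2) with hMdef
  set Ma := max Δa ((k:ℝ) + 2) with hMadef
  have hM3 : (3:ℝ) ≤ M := le_trans hk3 (le_max_right _ _)
  have hMpos : 0 < M := by linarith
  have hMapos : 0 < Ma := lt_of_lt_of_le (by linarith : (0:ℝ) < (k:ℝ)+2) (le_max_right _ _)
  have hlog3 : 0 < Real.log 3 := Real.log_pos (by norm_num)
  have hlogM3 : Real.log 3 ≤ Real.log M := Real.log_le_log (by norm_num) hM3
  have hlogd : 0 ≤ Real.log d := Real.log_nonneg hd
  have hMa_le : Ma ≤ d * M := by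
    apply max_le
    · calc Δa ≤ d * Δ := hΔale
        _ ≤ d * M := by
            have := le_max_left Δ ((k:ℝ)+2)
            nlinarith
    · have h1 : (k:ℝ) + 2 ≤ M := le_max_right _ _
      nlinarith
  have hlogMa : Real.log Ma ≤ Real.log d + Real.log M := by
    calc Real.log Ma ≤ Real.log (d * M) := Real.log_le_log hMapos hMa_le
      _ = Real.log d + Real.log M := Real.log_mul hd0.ne' hMpos.ne'
  have hζ : Real.log d + Real.log M ≤ Real.log (3 * d) / Real.log 3 * Real.log M := by
    rw [Real.log_mul (by norm_num) hd0.ne', div_mul_eq_mul_div, le_div_iff₀ hlog3]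
    nlinarith
  have hlogMa0 : 0 ≤ Real.log Ma := Real.log_nonneg (le_trans (by linarith) (le_max_right Δa ((k:ℝ)+2)))
  have hlogM0 : 0 ≤ Real.log M := by linarith
  have hk0 : (0:ℝ) ≤ (k:ℝ) := Nat.cast_nonneg k
  have hlogk : 0 < Real.log ((k:ℝ) + 2) := Real.log_pos (by linarith)
  have key : (k:ℝ) * Δa * Real.log Ma ≤
      d * (Real.log (3 * d) / Real.log 3) * ((k:ℝ) * Δ * Real.log M) := by
    calc (k:ℝ) * Δa * Real.log Ma
        ≤ (k:ℝ) * (d * Δ) * Real.log Ma := by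
          apply mul_le_mul_of_nonneg_right _ hlogMa0
          apply mul_le_mul_of_nonneg_left hΔale hk0
      _ ≤ (k:ℝ) * (d * Δ) * (Real.log d + Real.log M) := by
          apply mul_le_mul_of_nonneg_left hlogMa
          positivity
      _ ≤ (k:ℝ) * (d * Δ) * (Real.log (3 * d) / Real.log 3 * Real.log M) := by
          apply mul_le_mul_of_nonneg_left hζ
          positivity
      _ = d * (Real.log (3 * d) / Real.log 3) * ((k:ℝ) * Δ * Real.log M) := by ring
  show (k:ℝ) * Δa * Real.log Ma / Real.log ((k:ℝ) + 2) ≤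
      d * (Real.log (3 * d) / Real.log 3) *
        ((k:ℝ) * Δ * Real.log M / Real.log ((k:ℝ) + 2))
  rw [mul_div_assoc']
  exact div_le_div_of_nonneg_right key hlogk.le
end

section
/- Let X ~ N(a, ε) with a ≠ 0 and ε ∈ (0,1), and set R := (a/X)·1{X² ≥ ε} − 1. Then E[R⁴] ≤ 4, i.e., E[((a/X)1{X²≥ε} − 1)⁴] ≤ 4. -/
open MeasureTheory ProbabilityTheory Real Set

lemma quartic_exp_eq (b : ℝ) :
    (fun x : ℝ => x ^ (4:ℝ) * Real.exp (-b * x ^ 2))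
      = fun x : ℝ => x ^ 4 * Real.exp (-b * x ^ 2) := by
  funext x
  rw [show (4:ℝ) = ((4:ℕ):ℝ) by norm_num, Real.rpow_natCast]

lemma integrable_quartic_exp {b : ℝ} (hb : 0 < b) :
    Integrable (fun x : ℝ => x ^ 4 * Real.exp (-b * x ^ 2)) := by
  rw [← quartic_exp_eq b]
  exact integrable_rpow_mul_exp_neg_mul_sq hb (by norm_num)

lemma quartic_gaussian_integral {b : ℝ} (hb : 0 < b) :
    ∫ x : ℝ, x ^ 4 * Real.exp (-b * x ^ 2)
      = 3 / 4 * Real.sqrt π * b ^ (-(5:ℝ)/2) := by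
  have h1 : ∫ x : ℝ, x ^ 4 * Real.exp (-b * x ^ 2)
      = 2 * ∫ x in Ioi (0:ℝ), x ^ 4 * Real.exp (-b * x ^ 2) := by
    rw [← integral_comp_abs (f := fun x => x ^ 4 * Real.exp (-b * x ^ 2))]
    congr 1
    funext x
    rw [show |x| ^ 4 = x ^ 4 by rw [← abs_pow, abs_of_nonneg (by positivity)],
      show |x| ^ 2 = x ^ 2 from sq_abs x]
  have h2 : ∫ x in Ioi (0:ℝ), x ^ 4 * Real.exp (-b * x ^ 2)
      = b ^ (-((4:ℝ) + 1) / 2) * (1 / 2) * Real.Gamma (((4:ℝ) + 1) / 2) := by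
    rw [← integral_rpow_mul_exp_neg_mul_rpow (by norm_num : (0:ℝ) < 2)
      (by norm_num : (-1:ℝ) < 4) hb]
    refine setIntegral_congr_fun measurableSet_Ioi (fun x _ => ?_)
    rw [show (4:ℝ) = ((4:ℕ):ℝ) by norm_num, show (2:ℝ) = ((2:ℕ):ℝ) by norm_num,
      Real.rpow_natCast, Real.rpow_natCast]
  have hΓ : Real.Gamma (((4:ℝ) + 1) / 2) = 3 / 4 * Real.sqrt π := by
    rw [show ((4:ℝ) + 1) / 2 = 3/2 + 1 by norm_num, Real.Gamma_add_one (by norm_num),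
      show (3:ℝ)/2 = 1/2 + 1 by norm_num, Real.Gamma_add_one (by norm_num),
      Real.Gamma_one_half_eq]
    ring
  rw [h1, h2, hΓ, show (-((4:ℝ) + 1) / 2) = (-(5:ℝ)/2) by norm_num]
  ring

lemma gaussian_pdf_smul_eq (a : ℝ) {ε : NNReal} (g : ℝ → ℝ) :
    ∫ x, g x ∂(volume.withDensity (gaussianPDF a ε))
      = ∫ x, gaussianPDFReal a ε x * g x := by
  have hmeas : Measurable fun x => (gaussianPDFReal a ε x).toNNReal :=
    (measurable_gaussianPDFReal a ε).real_toNNReal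
  have : volume.withDensity (gaussianPDF a ε)
      = volume.withDensity (fun x => ((gaussianPDFReal a ε x).toNNReal : ENNReal)) := rfl
  rw [this, integral_withDensity_eq_integral_smul hmeas]
  congr 1
  funext x
  rw [NNReal.smul_def, smul_eq_mul, Real.coe_toNNReal _ (gaussianPDFReal_nonneg a ε x)]

lemma gaussian_pdf_mul_eq (a : ℝ) {ε : NNReal} (hε : ε ≠ 0) (g : ℝ → ℝ) :
    (fun x => gaussianPDFReal a ε x * g x)
      = fun x => (Real.sqrt (2 * π * ε))⁻¹ *
          (g x * Real.exp (-(2 * (ε:ℝ))⁻¹ * (x - a) ^ 2)) := by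
  funext x
  rw [gaussianPDFReal]
  have : -(x - a) ^ 2 / (2 * (ε:ℝ)) = -(2 * (ε:ℝ))⁻¹ * (x - a) ^ 2 := by ring
  rw [this]
  ring

lemma gaussian_fourth_central (a : ℝ) {ε : NNReal} (hε : ε ≠ 0) :
    ∫ x, (x - a) ^ 4 ∂(gaussianReal a ε) = 3 * (ε:ℝ) ^ 2 := by
  have hεpos : (0:ℝ) < ε := lt_of_le_of_ne ε.coe_nonneg (by exact_mod_cast hε.symm)
  have hb : (0:ℝ) < (2 * (ε:ℝ))⁻¹ := by positivity
  rw [gaussianReal_of_var_ne_zero a hε, gaussian_pdf_smul_eq,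
    gaussian_pdf_mul_eq a hε, integral_const_mul]
  have hsub : ∫ x : ℝ, (x - a) ^ 4 * Real.exp (-(2 * (ε:ℝ))⁻¹ * (x - a) ^ 2)
      = ∫ x : ℝ, x ^ 4 * Real.exp (-(2 * (ε:ℝ))⁻¹ * x ^ 2) :=
    integral_sub_right_eq_self (μ := volume)
      (fun y => y ^ 4 * Real.exp (-(2 * (ε:ℝ))⁻¹ * y ^ 2)) a
  rw [hsub, quartic_gaussian_integral hb]
  -- now pure arithmetic
  have h2ε : (0:ℝ) < 2 * (ε:ℝ) := by positivity
  have hrp : ((2 * (ε:ℝ))⁻¹) ^ (-(5:ℝ)/2) = (2 * (ε:ℝ)) ^ ((5:ℝ)/2) := by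
    rw [show (-(5:ℝ)/2) = -((5:ℝ)/2) by norm_num, Real.rpow_neg (by positivity),
      Real.inv_rpow h2ε.le, inv_inv]
  have h52 : (2 * (ε:ℝ)) ^ ((5:ℝ)/2) = (2 * (ε:ℝ)) ^ 2 * Real.sqrt (2 * (ε:ℝ)) := by
    rw [show (5:ℝ)/2 = ((2:ℕ):ℝ) + 1/2 by norm_num, Real.rpow_add h2ε,
      Real.rpow_natCast, ← Real.sqrt_eq_rpow]
  have hπ : Real.sqrt (2 * π * (ε:ℝ)) = Real.sqrt π * Real.sqrt (2 * (ε:ℝ)) := by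
    rw [show 2 * π * (ε:ℝ) = π * (2 * (ε:ℝ)) by ring, Real.sqrt_mul pi_pos.le]
  have hs : Real.sqrt (2 * (ε:ℝ)) * Real.sqrt (2 * (ε:ℝ)) = 2 * (ε:ℝ) :=
    Real.mul_self_sqrt h2ε.le
  have hs0 : Real.sqrt (2 * (ε:ℝ)) ≠ 0 := by positivity
  have hp0 : Real.sqrt π ≠ 0 := by
    have := pi_pos; positivity
  rw [hrp, h52, hπ]
  field_simp
  ring

/-- Fourth-moment bound: for `X ~ N(a, ε)` with `ε ∈ (0,1)` and
`R = (a/X)·1{X² ≥ ε} − 1`, one has `E[R⁴] ≤ 4`. -/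
theorem stmt_18 (a : ℝ) (ha : a ≠ 0) (ε : NNReal) (hε0 : 0 < ε) (hε1 : (ε : ℝ) < 1) :
    ∫ x, (Set.indicator {y : ℝ | (ε : ℝ) ≤ y ^ 2} (fun y => a / y) x - 1) ^ 4
      ∂(gaussianReal a ε) ≤ 4 := by
  have hε : ε ≠ 0 := hε0.ne'
  have hεpos : (0:ℝ) < ε := by exact_mod_cast hε0
  have hb : (0:ℝ) < (2 * (ε:ℝ))⁻¹ := by positivity
  -- integrability of the fourth central moment
  have hint4 : Integrable (fun x => (x - a) ^ 4) (gaussianReal a ε) := by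
    rw [gaussianReal_of_var_ne_zero a hε]
    have hmeas : Measurable fun x => (gaussianPDFReal a ε x).toNNReal :=
      (measurable_gaussianPDFReal a ε).real_toNNReal
    have : volume.withDensity (gaussianPDF a ε)
        = volume.withDensity (fun x => ((gaussianPDFReal a ε x).toNNReal : ENNReal)) := rfl
    rw [this, integrable_withDensity_iff_integrable_smul hmeas]
    have heq : (fun x => (gaussianPDFReal a ε x).toNNReal • (x - a) ^ 4)
        = fun x => (Real.sqrt (2 * π * ε))⁻¹ *
            ((x - a) ^ 4 * Real.exp (-(2 * (ε:ℝ))⁻¹ * (x - a) ^ 2)) := by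
      funext x
      rw [NNReal.smul_def, smul_eq_mul, Real.coe_toNNReal _ (gaussianPDFReal_nonneg a ε x)]
      exact congrFun (gaussian_pdf_mul_eq a hε (fun y => (y - a) ^ 4)) x
    rw [show (fun x => (gaussianPDFReal a ε x).toNNReal • (x - a) ^ 4 : ℝ → ℝ)
        = _ from heq]
    exact (((integrable_quartic_exp hb).comp_sub_right a).const_mul _)
  -- pointwise bound
  have hbound : ∀ x : ℝ,
      (Set.indicator {y : ℝ | (ε : ℝ) ≤ y ^ 2} (fun y => a / y) x - 1) ^ 4
        ≤ (x - a) ^ 4 / (ε:ℝ) ^ 2 + 1 := by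
    intro x
    by_cases hx : x ∈ {y : ℝ | (ε : ℝ) ≤ y ^ 2}
    · rw [Set.indicator_of_mem hx]
      have hx2 : (ε:ℝ) ≤ x ^ 2 := hx
      have hx0 : x ≠ 0 := by
        rintro rfl
        rw [show (0:ℝ) ^ 2 = 0 by norm_num] at hx2
        linarith
      have h1 : a / x - 1 = (a - x) / x := by field_simp
      rw [h1, div_pow, show ((a - x) ^ 4 : ℝ) = (x - a) ^ 4 by ring]
      have hx4 : (ε:ℝ) ^ 2 ≤ x ^ 4 := by
        calc (ε:ℝ) ^ 2 ≤ (x ^ 2) ^ 2 := pow_le_pow_left₀ hεpos.le hx2 2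
          _ = x ^ 4 := by ring
      have hmain : (x - a) ^ 4 / x ^ 4 ≤ (x - a) ^ 4 / (ε:ℝ) ^ 2 :=
        div_le_div_of_nonneg_left (by positivity) (by positivity) hx4
      linarith
    · rw [Set.indicator_of_notMem hx]
      have h0 : ((0:ℝ) - 1) ^ 4 = 1 := by norm_num
      rw [h0]
      have : (0:ℝ) ≤ (x - a) ^ 4 / (ε:ℝ) ^ 2 := by positivity
      linarith
  -- integrability of the bounding function and of the integrand
  have hg : Integrable (fun x => (x - a) ^ 4 / (ε:ℝ) ^ 2 + 1) (gaussianReal a ε) :=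
    (hint4.div_const _).add (integrable_const 1)
  have hSmeas : MeasurableSet {y : ℝ | (ε : ℝ) ≤ y ^ 2} :=
    measurableSet_le measurable_const (measurable_id.pow_const 2)
  have hfmeas : Measurable fun x =>
      (Set.indicator {y : ℝ | (ε : ℝ) ≤ y ^ 2} (fun y => a / y) x - 1) ^ 4 :=
    (((measurable_const.div measurable_id).indicator hSmeas).sub measurable_const).pow_const 4
  have hf : Integrable (fun x =>
      (Set.indicator {y : ℝ | (ε : ℝ) ≤ y ^ 2} (fun y => a / y) x - 1) ^ 4)
      (gaussianReal a ε) := by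
    refine hg.mono' hfmeas.aestronglyMeasurable (ae_of_all _ fun x => ?_)
    rw [Real.norm_eq_abs, abs_of_nonneg (by positivity)]
    exact hbound x
  calc ∫ x, (Set.indicator {y : ℝ | (ε : ℝ) ≤ y ^ 2} (fun y => a / y) x - 1) ^ 4
        ∂(gaussianReal a ε)
      ≤ ∫ x, ((x - a) ^ 4 / (ε:ℝ) ^ 2 + 1) ∂(gaussianReal a ε) :=
        integral_mono hf hg hbound
    _ = (∫ x, (x - a) ^ 4 ∂(gaussianReal a ε)) / (ε:ℝ) ^ 2 + 1 := by
        rw [integral_add (hint4.div_const _) (integrable_const 1), integral_div,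
          integral_const]
        simp
    _ = 3 * (ε:ℝ) ^ 2 / (ε:ℝ) ^ 2 + 1 := by rw [gaussian_fourth_central a hε]
    _ = 4 := by
        rw [mul_div_assoc, div_self (by positivity), mul_one]
        norm_num
end
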